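/- Let T > 0, let Ω_on ⊂ ℝ be measurable, let q_on ∈ L^∞([0,T]; ℝ_{≥0}), and let ω, ω̃ ∈ L¹(ℝ; ℝ_{≥0}) with ‖ω‖_{L¹(ℝ)} = 1. Let ρ, ρ̃ : [0,T] × ℝ → [0,1] be such that ρ(t,·), ρ̃(t,·) ∈ L¹(ℝ) for a.e. t, with t ↦ ‖ρ(t,·) − ρ̃(t,·)‖_{L¹(ℝ)} and t ↦ ‖ρ̃(t,·)‖_{L¹(ℝ)} integrable on [0,T]. Set R(t,x) = (ρ(t,·)∗ω)(x) and R̃(t,x) = (ρ̃(t,·)∗ω̃)(x). Then ∫₀^T ∫_{Ω_on} |q_on(t)(1 − ρ(t,x))(1 − R(t,x)) − q_on(t)(1 − ρ(t,x))(1 − R̃(t,x))| dx dt ≤ ‖q_on‖_{L^∞([0,T])} ∫₀^T ‖ρ(t,·) − ρ̃(t,·)‖_{L¹(ℝ)} dt + ‖q_on‖_{L^∞([0,T])} ‖ω − ω̃‖_{L¹(ℝ)} ∫₀^T ‖ρ̃(t,·)‖_{L¹(ℝ)} dt. -/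

import Mathlib

/-! The factor `q (1 - ρ)` lies between `0` and `q ≤ ‖q‖_∞`, so everything reduces to an `L¹`
bound on `R - R̃`. Splitting `ρ∗ω - ρ̃∗ω̃ = (ρ - ρ̃)∗ω + ρ̃∗(ω - ω̃)` and dominating each piece by
the convolution of the absolute values, whose integral is the product of the `L¹` norms
(Fubini), gives `‖R - R̃‖₁ ≤ ‖ρ - ρ̃‖₁ ‖ω‖₁ + ‖ρ̃‖₁ ‖ω - ω̃‖₁`. For `L¹` data the integral
defining `(f∗g)(x)` converges for almost every `x`, which is all the splitting needs. -/

open MeasureTheory Set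

/-- Correlation-type convolution: `(f∗g)(x) = ∫ f(y) g(y − x) dy`. -/
noncomputable def conv (f g : ℝ → ℝ) (x : ℝ) : ℝ := ∫ y, f y * g (y - x)

open scoped Convolution

section Conv

variable {f f' g g' : ℝ → ℝ}

lemma conv_eq_convolution (f g : ℝ → ℝ) :
    conv f g = f ⋆[ContinuousLinearMap.mul ℝ ℝ] fun z => g (-z) := by
  funext x
  simp only [conv, convolution_def, ContinuousLinearMap.mul_apply', neg_sub]

lemma integrable_conv (hf : Integrable f) (hg : Integrable g) : Integrable (conv f g) := by
  rw [conv_eq_convolution]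
  exact hf.integrable_convolution _ hg.comp_neg

lemma integral_conv (hf : Integrable f) (hg : Integrable g) :
    ∫ x, conv f g x = (∫ x, f x) * ∫ x, g x := by
  rw [conv_eq_convolution, integral_convolution _ hf hg.comp_neg,
    ContinuousLinearMap.mul_apply', integral_neg_eq_self]

lemma ae_integrable_mul_comp_sub (hf : Integrable f) (hg : Integrable g) :
    ∀ᵐ x, Integrable fun y => f y * g (y - x) := by
  filter_upwards [hf.ae_convolution_exists (ContinuousLinearMap.mul ℝ ℝ) hg.comp_neg] with x hx
  simpa only [ConvolutionExistsAt, ContinuousLinearMap.mul_apply', neg_sub] using hx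

lemma abs_conv_sub_conv_le {x : ℝ} (hfg : Integrable fun y => f y * g (y - x))
    (hf'g : Integrable fun y => f' y * g (y - x))
    (hf'g' : Integrable fun y => f' y * g' (y - x)) :
    |conv f g x - conv f' g' x| ≤
      conv (fun y => |f y - f' y|) (fun z => |g z|) x
        + conv (fun y => |f' y|) (fun z => |g z - g' z|) x := by
  have hsplit : conv f g x - conv f' g' x =
      (∫ y, (f y - f' y) * g (y - x)) + ∫ y, f' y * (g (y - x) - g' (y - x)) := by
    simp only [conv, sub_mul, mul_sub, integral_sub hfg hf'g, integral_sub hf'g hf'g']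
    ring
  rw [hsplit]
  refine (abs_add_le _ _).trans (add_le_add ?_ ?_) <;>
    exact abs_integral_le_integral_abs.trans_eq (by simp only [conv, abs_mul])

lemma integral_abs_conv_sub_conv_le (hf : Integrable f) (hf' : Integrable f')
    (hg : Integrable g) (hg' : Integrable g') :
    ∫ x, |conv f g x - conv f' g' x| ≤
      (∫ x, |f x - f' x|) * (∫ x, |g x|) + (∫ x, |f' x|) * ∫ x, |g x - g' x| := by
  have h₁ : Integrable (conv (fun y => |f y - f' y|) fun z => |g z|) :=
    integrable_conv (hf.sub hf').abs hg.abs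
  have h₂ : Integrable (conv (fun y => |f' y|) fun z => |g z - g' z|) :=
    integrable_conv hf'.abs (hg.sub hg').abs
  calc ∫ x, |conv f g x - conv f' g' x|
      ≤ ∫ x, (conv (fun y => |f y - f' y|) (fun z => |g z|) x
          + conv (fun y => |f' y|) (fun z => |g z - g' z|) x) := by
        refine integral_mono_of_nonneg (ae_of_all _ fun x => abs_nonneg _) (h₁.add h₂) ?_
        filter_upwards [ae_integrable_mul_comp_sub hf hg, ae_integrable_mul_comp_sub hf' hg,
          ae_integrable_mul_comp_sub hf' hg'] with x hfg hf'g hf'g'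
        exact abs_conv_sub_conv_le hfg hf'g hf'g'
    _ = _ := by
        rw [integral_add h₁ h₂,
          integral_conv (f := fun y => |f y - f' y|) (hf.sub hf').abs hg.abs,
          integral_conv (g := fun z => |g z - g' z|) hf'.abs (hg.sub hg').abs]

end Conv

lemma abs_mul_one_sub_sub_mul_one_sub_le {q r a b : ℝ} (hq : 0 ≤ q) (hr : r ∈ Icc (0 : ℝ) 1) :
    |q * (1 - r) * (1 - a) - q * (1 - r) * (1 - b)| ≤ q * |a - b| := by
  have hqr : 0 ≤ q * (1 - r) := mul_nonneg hq (by linarith [hr.2])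
  calc |q * (1 - r) * (1 - a) - q * (1 - r) * (1 - b)|
      = q * (1 - r) * |a - b| := by
        rw [show q * (1 - r) * (1 - a) - q * (1 - r) * (1 - b) = q * (1 - r) * (b - a) by ring,
          abs_mul, abs_of_nonneg hqr, abs_sub_comm]
    _ ≤ q * |a - b| :=
        mul_le_mul_of_nonneg_right (mul_le_of_le_one_right hq (by linarith [hr.1])) (abs_nonneg _)

lemma setIntegral_abs_source_sub_le (s : Set ℝ) {q : ℝ} (hq : 0 ≤ q) {r f f' g g' : ℝ → ℝ}
    (hr : ∀ x, r x ∈ Icc (0 : ℝ) 1) (hf : Integrable f) (hf' : Integrable f')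
    (hg : Integrable g) (hg' : Integrable g') :
    ∫ x in s, |q * (1 - r x) * (1 - conv f g x) - q * (1 - r x) * (1 - conv f' g' x)| ≤
      q * ((∫ x, |f x - f' x|) * (∫ x, |g x|) + (∫ x, |f' x|) * ∫ x, |g x - g' x|) := by
  have hR : Integrable fun x => q * |conv f g x - conv f' g' x| :=
    ((integrable_conv hf hg).sub (integrable_conv hf' hg')).abs.const_mul q
  calc _ ≤ ∫ x in s, q * |conv f g x - conv f' g' x| :=
        integral_mono_of_nonneg (ae_of_all _ fun _ => abs_nonneg _) hR.integrableOn
          (ae_of_all _ fun x => abs_mul_one_sub_sub_mul_one_sub_le hq (hr x))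
    _ ≤ ∫ x, q * |conv f g x - conv f' g' x| :=
        setIntegral_le_integral hR (ae_of_all _ fun _ => by positivity)
    _ ≤ _ := by
        rw [integral_const_mul]
        exact mul_le_mul_of_nonneg_left (integral_abs_conv_sub_conv_le hf hf' hg hg') hq

section EssSup

variable {α : Type*} [MeasurableSpace α] {μ : Measure α} {q F G : α → ℝ}

lemma MeasureTheory.MemLp.ae_le_essSup (hq : MemLp q ⊤ μ) : ∀ᵐ t ∂μ, q t ≤ essSup q μ := by
  have hq_fin : eLpNormEssSup q μ < ⊤ := by simpa only [eLpNorm_exponent_top] using hq.2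
  obtain ⟨C, hC⟩ := eLpNormEssSup_lt_top_iff_isBoundedUnder.mp hq_fin
  refine _root_.ae_le_essSup ⟨C, Filter.eventually_map.2 ?_⟩
  filter_upwards [Filter.eventually_map.1 hC] with t ht
  exact (le_abs_self _).trans (by exact_mod_cast ht)

lemma integral_le_essSup_mul_integral (hq : MemLp q ⊤ μ) (hF : Integrable F μ)
    (hF₀ : 0 ≤ᵐ[μ] F) (hG₀ : 0 ≤ᵐ[μ] G) (hGF : ∀ᵐ t ∂μ, G t ≤ q t * F t) :
    ∫ t, G t ∂μ ≤ essSup q μ * ∫ t, F t ∂μ := by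
  rw [← integral_const_mul]
  refine integral_mono_of_nonneg hG₀ (hF.const_mul _) ?_
  filter_upwards [hGF, hq.ae_le_essSup, hF₀] with t hG hqt hFt
  exact hG.trans (mul_le_mul_of_nonneg_right hqt hFt)

end EssSup

theorem Son1_bound_general
    (T : ℝ) (Ωon : Set ℝ)
    (qon : ℝ → ℝ) (hqon_nonneg : ∀ t, 0 ≤ qon t)
    (hqon : MemLp qon ⊤ (volume.restrict (Icc 0 T)))
    (ω ω' : ℝ → ℝ)
    (hω : Integrable ω) (hω' : Integrable ω')
    (hω_norm : (∫ x, |ω x|) = 1)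
    (ρ ρ' : ℝ → ℝ → ℝ)
    (hρ01 : ∀ t x, ρ t x ∈ Icc (0:ℝ) 1)
    (hρ_int : ∀ᵐ t ∂(volume.restrict (Icc 0 T)), Integrable (ρ t))
    (hρ'_int : ∀ᵐ t ∂(volume.restrict (Icc 0 T)), Integrable (ρ' t))
    (hdiff_int : IntegrableOn (fun t => ∫ x, |ρ t x - ρ' t x|) (Icc 0 T))
    (hρ'_L1_int : IntegrableOn (fun t => ∫ x, |ρ' t x|) (Icc 0 T)) :
    (∫ t in Icc 0 T, ∫ x in Ωon,
        |qon t * (1 - ρ t x) * (1 - conv (ρ t) ω x)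
          - qon t * (1 - ρ t x) * (1 - conv (ρ' t) ω' x)|) ≤
      essSup qon (volume.restrict (Icc 0 T)) * (∫ t in Icc 0 T, ∫ x, |ρ t x - ρ' t x|)
      + essSup qon (volume.restrict (Icc 0 T)) * (∫ x, |ω x - ω' x|)
          * (∫ t in Icc 0 T, ∫ x, |ρ' t x|) := by
  have hB := hρ'_L1_int.const_mul (∫ x, |ω x - ω' x|)
  rw [mul_assoc, ← mul_add, ← integral_const_mul, ← integral_add hdiff_int hB]
  refine integral_le_essSup_mul_integral hqon (hdiff_int.add hB)
    (ae_of_all _ fun t => by positivity)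
    (ae_of_all _ fun t => integral_nonneg fun x => abs_nonneg _) ?_
  filter_upwards [hρ_int, hρ'_int] with t hρt hρ't
  have h := setIntegral_abs_source_sub_le Ωon (hqon_nonneg t) (hρ01 t) hρt hρ't hω hω'
  rwa [hω_norm, mul_one, mul_comm (∫ x, |ρ' t x|)] at h

/-- Bound on the contribution `S̃¹_on` coming from the two different nonlocal means
`R = ρ∗ω` and `R̃ = ρ̃∗ω̃`:
`∫₀^T ∫_{Ω_on} |q_on(1−ρ)(1−R) − q_on(1−ρ)(1−R̃)| ≤
  ‖q_on‖_{L∞} ∫₀^T ‖ρ(t)−ρ̃(t)‖_{L¹} dt + ‖q_on‖_{L∞} ‖ω−ω̃‖_{L¹} ∫₀^T ‖ρ̃(t)‖_{L¹} dt`. -/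
theorem Son1_bound
    (T : ℝ) (hT : 0 < T) (Ωon : Set ℝ) (hΩon : MeasurableSet Ωon)
    (qon : ℝ → ℝ) (hqon_nonneg : ∀ t, 0 ≤ qon t)
    (hqon : MemLp qon ⊤ (volume.restrict (Icc 0 T)))
    (ω ω' : ℝ → ℝ) (hω_nonneg : ∀ x, 0 ≤ ω x) (hω'_nonneg : ∀ x, 0 ≤ ω' x)
    (hω : Integrable ω) (hω' : Integrable ω')
    (hω_norm : (∫ x, |ω x|) = 1)
    (ρ ρ' : ℝ → ℝ → ℝ)
    (hρ01 : ∀ t x, ρ t x ∈ Icc (0:ℝ) 1) (hρ'01 : ∀ t x, ρ' t x ∈ Icc (0:ℝ) 1)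
    (hρ_int : ∀ᵐ t ∂(volume.restrict (Icc 0 T)), Integrable (ρ t))
    (hρ'_int : ∀ᵐ t ∂(volume.restrict (Icc 0 T)), Integrable (ρ' t))
    (hdiff_int : IntegrableOn (fun t => ∫ x, |ρ t x - ρ' t x|) (Icc 0 T))
    (hρ'_L1_int : IntegrableOn (fun t => ∫ x, |ρ' t x|) (Icc 0 T)) :
    (∫ t in Icc 0 T, ∫ x in Ωon,
        |qon t * (1 - ρ t x) * (1 - conv (ρ t) ω x)
          - qon t * (1 - ρ t x) * (1 - conv (ρ' t) ω' x)|) ≤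
      essSup qon (volume.restrict (Icc 0 T)) * (∫ t in Icc 0 T, ∫ x, |ρ t x - ρ' t x|)
      + essSup qon (volume.restrict (Icc 0 T)) * (∫ x, |ω x - ω' x|)
          * (∫ t in Icc 0 T, ∫ x, |ρ' t x|) :=
  Son1_bound_general T Ωon qon hqon_nonneg hqon ω ω' hω hω' hω_norm ρ ρ' hρ01 hρ_int hρ'_int
    hdiff_int hρ'_L1_int
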